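/- arXiv:2306.17802 — 2 statements merged into one kernel-verified Lean document; each statement's English description precedes it below -/
import Mathlib

section
/- Let $S \in \mathrm{GL}(m,\mathbb{C})$ be a semisimple (diagonalizable) matrix. Then $S$ lies in $Z(C(S))$, and there is a continuous path $\gamma : [0,1] \to \mathrm{GL}(m,\mathbb{C})$ with $\gamma(0) = I$, $\gamma(1) = S$, and $\gamma(t) \in Z(C(S))$ for all $t$; that is, every semisimple element of $\mathrm{GL}(m,\mathbb{C})$ is contained in the identity path-component of the center of its centralizer (it has `well-behaved monodromy' in the sense of the paper). -/
open Matrix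

/-- A matrix is semisimple if it is diagonalizable over `ℂ`. -/
def IsSemisimpleMatrix {m : ℕ} (S : Matrix (Fin m) (Fin m) ℂ) : Prop :=
  ∃ (P : (Matrix (Fin m) (Fin m) ℂ)ˣ) (d : Fin m → ℂ),
    S = (P : Matrix (Fin m) (Fin m) ℂ) * Matrix.diagonal d * (↑P⁻¹ : Matrix (Fin m) (Fin m) ℂ)

/-- The centre of the centralizer of `S` in `GL(m, ℂ)`, viewed as a set of matrices. -/
def centreCentralizer {m : ℕ} (S : Matrix (Fin m) (Fin m) ℂ) :
    Set (Matrix (Fin m) (Fin m) ℂ) :=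
  {g | IsUnit g ∧ g * S = S * g ∧
    ∀ h : Matrix (Fin m) (Fin m) ℂ, IsUnit h → h * S = S * h → g * h = h * g}

/-!
Write `S = P D P⁻¹` with `D = diagonal d`. A matrix `A` commuting with `D` has `A i j = 0`
whenever `d i ≠ d j`, so it also commutes with `diagonal (f ∘ d)` for every function `f`.
Conjugating back, every invertible `P (diagonal (f ∘ d)) P⁻¹` lies in `Z(C(S))`. Taking
`f z = exp (t log z)` gives a path from `1` to `S`, through invertible matrices since `exp` never
vanishes, and ending at `S` because the eigenvalues `d i` of the invertible `S` are nonzero.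
-/

theorem Commute.units_conj_iff {M : Type*} [Monoid M] (u : Mˣ) {a b : M} :
    Commute (u * a * ↑u⁻¹) (u * b * ↑u⁻¹) ↔ Commute a b := by
  simp only [Commute, SemiconjBy, mul_assoc, Units.inv_mul_cancel_left, Units.mul_right_inj]
  simp only [← mul_assoc, Units.mul_left_inj]

namespace Matrix

variable {n R : Type*} [Fintype n] [DecidableEq n] [CommRing R] [NoZeroDivisors R]

theorem commute_diagonal_comp_of_commute_diagonal {A : Matrix n n R} {d : n → R}
    (h : Commute A (diagonal d)) (f : R → R) : Commute A (diagonal (f ∘ d)) := by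
  ext i j
  have hij : A i j * d j = d i * A i j := by simpa using congrFun (congrFun h.eq i) j
  simp only [mul_diagonal, diagonal_mul, Function.comp_apply]
  rcases eq_or_ne (A i j) 0 with hA | hA
  · simp [hA]
  · rw [mul_left_cancel₀ hA (hij.trans (mul_comm _ _)), mul_comm]

theorem commute_conj_diagonal_comp_of_commute (P : (Matrix n n R)ˣ) {A : Matrix n n R}
    {d : n → R} (h : Commute A (P * diagonal d * P⁻¹)) (f : R → R) :
    Commute A (P * diagonal (f ∘ d) * P⁻¹) := by
  have hA : A = P * (P⁻¹ * A * P) * P⁻¹ := by simp [mul_assoc]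
  rw [hA, Commute.units_conj_iff] at h ⊢
  exact commute_diagonal_comp_of_commute_diagonal h f

theorem isUnit_conj_diagonal_iff {K : Type*} [Field K] (P : (Matrix n n K)ˣ) {d : n → K} :
    IsUnit (P * diagonal d * P⁻¹ : Matrix n n K) ↔ ∀ i, d i ≠ 0 := by
  simp [isUnit_diagonal, Pi.isUnit_iff]

end Matrix

theorem conj_diagonal_comp_mem_centreCentralizer {m : ℕ} (P : (Matrix (Fin m) (Fin m) ℂ)ˣ)
    (d : Fin m → ℂ) {f : ℂ → ℂ} (hf : ∀ i, f (d i) ≠ 0) :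
    P * diagonal (f ∘ d) * P⁻¹ ∈
      centreCentralizer (P * diagonal d * P⁻¹ : Matrix (Fin m) (Fin m) ℂ) := by
  refine ⟨?_, ?_, fun h _ hh => (commute_conj_diagonal_comp_of_commute P hh f).eq.symm⟩
  · exact (isUnit_conj_diagonal_iff P).mpr hf
  · exact (commute_conj_diagonal_comp_of_commute P (Commute.refl _) f).eq.symm

/-- a semisimple `S ∈ GL(m, ℂ)` lies in `Z(C(S))` and is joined to the
identity matrix by a continuous path staying inside `Z(C(S))`; i.e. `S` has
`well-behaved monodromy'. -/
theorem semisimple_wellBehaved_monodromy {m : ℕ} (S : Matrix (Fin m) (Fin m) ℂ)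
    (hS : IsUnit S) (hss : IsSemisimpleMatrix S) :
    S ∈ centreCentralizer S ∧
    ∃ γ : unitInterval → Matrix (Fin m) (Fin m) ℂ,
      Continuous γ ∧ γ 0 = 1 ∧ γ 1 = S ∧ ∀ t, γ t ∈ centreCentralizer S := by
  refine ⟨⟨hS, rfl, fun _ _ hh => hh.symm⟩, ?_⟩
  obtain ⟨P, d, rfl⟩ := hss
  have hd : ∀ i, d i ≠ 0 := (isUnit_conj_diagonal_iff P).mp hS
  let γ : unitInterval → Matrix (Fin m) (Fin m) ℂ := fun t =>
    P * diagonal ((fun z => Complex.exp ((t : ℝ) * Complex.log z)) ∘ d) * P⁻¹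
  refine ⟨γ, by fun_prop, by simp [γ, Function.comp_def], ?_, fun t => ?_⟩
  · simp [γ, Function.comp_def, Complex.exp_log, hd]
  · exact conj_diagonal_comp_mem_centreCentralizer P d fun _ => Complex.exp_ne_zero _
end

section
/- Let $V$ be a finite-dimensional vector space over a field $K$, and let $F, G : \mathbb{Z} \to \{\text{subspaces of } V\}$ be two decreasing (antitone) filtrations, i.e. $F(i+1) \subseteq F(i)$ and $G(j+1) \subseteq G(j)$ for all $i, j \in \mathbb{Z}$. Then $F$ and $G$ can be simultaneously split: there exists a basis $b$ of $V$ such that for every $i \in \mathbb{Z}$, $F(i)$ is the span of the set of basis vectors contained in $F(i)$, and for every $j \in \mathbb{Z}$, $G(j)$ is the span of the set of basis vectors contained in $G(j)$. -/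
/-!
Choose, for all `i j`, a complement `W i j` of `F (i + 1) ⊓ G j ⊔ F i ⊓ G (j + 1)` inside
`F i ⊓ G j`. Unwinding `F p ⊓ G q = W p q ⊔ F (p + 1) ⊓ G q ⊔ F p ⊓ G (q + 1)` shows
that `F p ⊓ G q` is the sum of the `W i j` with `i ≥ p`, `j ≥ q`, and the modular law shows
that each `W i j` meets the sum of the lexicographically later ones trivially. Hence `V` is the
internal direct sum of the `W i j`, and concatenating bases of the summands gives a basis
adapted to every `F p` and every `G q`. Finite dimensionality makes both filtrations
stabilise, so after replacing them by `⊤` far to the left and `⊥` far to the right the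
unwinding terminates.
-/

open Filter Submodule

namespace Module.Basis

variable {ι R M : Type*} [Semiring R] [AddCommMonoid M] [Module R M]

def Splits (b : Basis ι R M) (U : Submodule R M) : Prop :=
  span R (Set.range b ∩ U) = U

variable {b : Basis ι R M}

theorem splits_iff_le {U : Submodule R M} : b.Splits U ↔ U ≤ span R (Set.range b ∩ U) :=
  ⟨Eq.ge, fun h => le_antisymm (span_le.2 Set.inter_subset_right) h⟩

theorem splits_iSup {κ : Sort*} {U : κ → Submodule R M} (h : ∀ k, b.Splits (U k)) :
    b.Splits (⨆ k, U k) :=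
  splits_iff_le.2 <| iSup_le fun k =>
    (h k).ge.trans (span_mono (Set.inter_subset_inter_right _ (le_iSup U k)))

end Module.Basis

theorem DirectSum.IsInternal.collectedBasis_splits {R M κ : Type*} [Semiring R]
    [AddCommMonoid M] [Module R M] [DecidableEq κ] {W : κ → Submodule R M}
    (h : DirectSum.IsInternal W) {β : κ → Type*} (v : ∀ k, Module.Basis (β k) R (W k))
    (k : κ) :
    (h.collectedBasis v).Splits (W k) := by
  refine Module.Basis.splits_iff_le.2 ?_
  have hW : W k = span R ((W k).subtype '' Set.range (v k)) := by
    rw [← map_span, (v k).span_eq, Submodule.map_top, range_subtype]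
  refine hW.le.trans (span_mono ?_)
  rintro _ ⟨_, ⟨a, rfl⟩, rfl⟩
  exact ⟨⟨⟨k, a⟩, by rw [h.collectedBasis_coe]; rfl⟩, (v k a).2⟩

theorem DirectSum.IsInternal.exists_basis_splits {K V : Type*} {κ : Type} [DivisionRing K]
    [AddCommGroup V] [Module K V] [FiniteDimensional K V] [DecidableEq κ]
    {W : κ → Submodule K V} (h : DirectSum.IsInternal W) :
    ∃ (ι : Type) (b : Module.Basis ι K V), ∀ k, b.Splits (W k) :=
  ⟨_, _, h.collectedBasis_splits fun k => Module.finBasis K (W k)⟩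

theorem iSupIndep_of_disjoint_iSup_gt {α ι : Type*} [CompleteLattice α] [IsModularLattice α]
    [IsCompactlyGenerated α] [LinearOrder ι] {f : ι → α}
    (h : ∀ i, Disjoint (f i) (⨆ j > i, f j)) : iSupIndep f := by
  classical
  refine iSupIndep_iff_supIndep.2 fun s => ?_
  induction s using Finset.induction_on_min with
  | empty => exact Finset.supIndep_empty f
  | insert a s ha ih =>
    exact ih.insert ((h a).mono_right
      (Finset.sup_le fun j hj => le_iSup₂_of_le j (ha j hj) le_rfl))

theorem le_iSup_quadrant_of_le_sup_succ {α : Type*} [CompleteLattice α] {f w : ℤ → ℤ → α}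
    {N : ℤ} (hN : ∀ p q, N ≤ p ∨ N ≤ q → f p q = ⊥)
    (hrec : ∀ p q, f p q ≤ f (p + 1) q ⊔ f p (q + 1) ⊔ w p q) (p q : ℤ) :
    f p q ≤ ⨆ i ≥ p, ⨆ j ≥ q, w i j := by
  by_cases hpq : N ≤ p ∨ N ≤ q
  · simp [hN p q hpq]
  refine (hrec p q).trans (sup_le (sup_le ?_ ?_) ?_)
  · exact (le_iSup_quadrant_of_le_sup_succ hN hrec (p + 1) q).trans
      (biSup_mono fun i hi => by omega)
  · exact (le_iSup_quadrant_of_le_sup_succ hN hrec p (q + 1)).trans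
      (iSup₂_mono fun i _ => biSup_mono fun j hj => by omega)
  · exact le_iSup₂_of_le p le_rfl (le_iSup₂_of_le q le_rfl le_rfl)
termination_by (N - p).toNat + (N - q).toNat
decreasing_by all_goals omega

section Bifiltration

variable {α : Type*} [CompleteLattice α] {F G : ℤ → α} {W : ℤ → ℤ → α}

/-- `W i j` lifts the piece `(F i ⊓ G j) / (F (i + 1) ⊓ G j ⊔ F i ⊓ G (j + 1))` of the
associated bigraded object. -/
def IsBigradedLift (F G : ℤ → α) (W : ℤ → ℤ → α) : Prop :=
  ∀ i j, Disjoint (F (i + 1) ⊓ G j ⊔ F i ⊓ G (j + 1)) (W i j) ∧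
    F (i + 1) ⊓ G j ⊔ F i ⊓ G (j + 1) ⊔ W i j = F i ⊓ G j

theorem exists_isBigradedLift [IsModularLattice α] [ComplementedLattice α] (hF : Antitone F)
    (hG : Antitone G) : ∃ W, IsBigradedLift F G W := by
  choose W hW using fun i j => IsModularLattice.exists_disjoint_and_sup_eq
    (sup_le (inf_le_inf_right (G j) (hF (lt_add_one i).le))
      (inf_le_inf_left (F i) (hG (lt_add_one j).le)))
  exact ⟨W, hW⟩

namespace IsBigradedLift

theorem le (hW : IsBigradedLift F G W) (i j : ℤ) : W i j ≤ F i ⊓ G j :=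
  le_sup_right.trans (hW i j).2.le

theorem inf_eq_iSup (hW : IsBigradedLift F G W) (hF : Antitone F) (hG : Antitone G) {N : ℤ}
    (hFN : F N = ⊥) (hGN : G N = ⊥) (p q : ℤ) :
    F p ⊓ G q = ⨆ i ≥ p, ⨆ j ≥ q, W i j := by
  refine le_antisymm ?_ (iSup₂_le fun i hi => iSup₂_le fun j hj =>
    (hW.le i j).trans (inf_le_inf (hF hi) (hG hj)))
  refine le_iSup_quadrant_of_le_sup_succ (f := fun p q => F p ⊓ G q) (N := N) ?_
    (fun p q => (hW p q).2.ge) p q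
  rintro p q (h | h)
  · exact eq_bot_iff.2 (inf_le_left.trans ((hF h).trans hFN.le))
  · exact eq_bot_iff.2 (inf_le_right.trans ((hG h).trans hGN.le))

theorem disjoint_iSup_lex_gt [IsModularLattice α] (hW : IsBigradedLift F G W) (hF : Antitone F)
    (hG : Antitone G) (i j : ℤ) :
    Disjoint (W i j) (⨆ k > toLex (i, j), W (ofLex k).1 (ofLex k).2) := by
  have hlater :
      ⨆ k > toLex (i, j), W (ofLex k).1 (ofLex k).2 ≤ F (i + 1) ⊔ F i ⊓ G (j + 1) := by
    refine iSup₂_le fun k hk => ?_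
    rcases Prod.Lex.lt_iff.1 hk with hi | ⟨hi, hj⟩
    · change i < _ at hi
      exact le_sup_of_le_left ((hW.le _ _).trans (inf_le_left.trans (hF (by omega))))
    · change i = _ at hi
      change j < _ at hj
      exact le_sup_of_le_right ((hW.le _ _).trans (inf_le_inf (hi ▸ le_rfl) (hG (by omega))))
  have hmod :
      G j ⊓ (F (i + 1) ⊔ F i ⊓ G (j + 1)) = F (i + 1) ⊓ G j ⊔ F i ⊓ G (j + 1) := by
    rw [← inf_sup_assoc_of_le _ (inf_le_right.trans (hG (lt_add_one j).le)), inf_comm (G j)]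
  refine Disjoint.mono_right hlater ?_
  rw [disjoint_iff, ← inf_eq_left.2 ((hW.le i j).trans inf_le_right), inf_assoc, hmod]
  exact disjoint_iff.1 (hW i j).1.symm

theorem iSupIndep_lex [IsModularLattice α] [IsCompactlyGenerated α]
    (hW : IsBigradedLift F G W) (hF : Antitone F) (hG : Antitone G) :
    iSupIndep fun k : ℤ ×ₗ ℤ => W (ofLex k).1 (ofLex k).2 :=
  iSupIndep_of_disjoint_iSup_gt fun k => hW.disjoint_iSup_lex_gt hF hG (ofLex k).1 (ofLex k).2

end IsBigradedLift

end Bifiltration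

open Module.Basis in
theorem exists_basis_splits_of_eq_top_of_eq_bot {K V : Type*} [DivisionRing K] [AddCommGroup V]
    [Module K V] [FiniteDimensional K V] {F G : ℤ → Submodule K V} (hF : Antitone F)
    (hG : Antitone G) {lo N : ℤ} (hFlo : F lo = ⊤) (hGlo : G lo = ⊤) (hFN : F N = ⊥)
    (hGN : G N = ⊥) :
    ∃ (ι : Type) (b : Module.Basis ι K V),
      (∀ i, b.Splits (F i)) ∧ ∀ j, b.Splits (G j) := by
  obtain ⟨W, hW⟩ := exists_isBigradedLift hF hG
  have hsum := hW.inf_eq_iSup hF hG hFN hGN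
  have hint : DirectSum.IsInternal fun k : ℤ ×ₗ ℤ => W (ofLex k).1 (ofLex k).2 := by
    refine (DirectSum.isInternal_submodule_iff_iSupIndep_and_iSup_eq_top _).2
      ⟨hW.iSupIndep_lex hF hG, eq_top_iff.2 ?_⟩
    calc ⊤ = F lo ⊓ G lo := by rw [hFlo, hGlo, inf_top_eq]
      _ = ⨆ i ≥ lo, ⨆ j ≥ lo, W i j := hsum lo lo
      _ ≤ _ := iSup₂_le fun i _ => iSup₂_le fun j _ =>
        le_iSup (fun k : ℤ ×ₗ ℤ => W (ofLex k).1 (ofLex k).2) (toLex (i, j))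
  obtain ⟨ι, b, hb⟩ := hint.exists_basis_splits
  have hquad (p q : ℤ) : b.Splits (F p ⊓ G q) := by
    rw [hsum]
    exact splits_iSup fun i => splits_iSup fun _ => splits_iSup fun j => splits_iSup fun _ =>
      hb (toLex (i, j))
  exact ⟨ι, b, fun p => by simpa [hGlo] using hquad p lo,
    fun q => by simpa [hFlo] using hquad lo q⟩

theorem Antitone.exists_eq_apply_max_min {α : Type*} [PartialOrder α] [WellFoundedLT α]
    [WellFoundedGT α] {F : ℤ → α} (hF : Antitone F) :
    ∃ lo hi, lo ≤ hi ∧ ∀ i, F i = F (max lo (min i hi)) := by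
  obtain ⟨m, hm⟩ := WellFoundedGT.monotone_chain_condition
    ⟨fun n : ℕ => F (-n), fun a b h => hF (by omega)⟩
  obtain ⟨n, hn⟩ := WellFoundedLT.antitone_chain_condition (f := fun n : ℕ => F n)
    fun a b h => hF (by omega)
  refine ⟨-m, n, by omega, fun i => ?_⟩
  rcases le_or_gt i (-m) with hi | hi
  · obtain ⟨k, rfl⟩ : ∃ k : ℕ, i = -k := ⟨(-i).toNat, by omega⟩
    rw [show max (-(m : ℤ)) (min (-k) n) = -m by omega]
    exact (hm k (by omega)).symm
  rcases le_or_gt (n : ℤ) i with hi' | hi'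
  · obtain ⟨k, rfl⟩ : ∃ k : ℕ, i = k := ⟨i.toNat, by omega⟩
    rw [show max (-(m : ℤ)) (min k n) = n by omega]
    exact (hn k (by omega)).symm
  · rw [show max (-(m : ℤ)) (min i n) = i by omega]

theorem Antitone.exists_pad_top_bot {α : Type*} [PartialOrder α] [BoundedOrder α]
    [WellFoundedLT α] [WellFoundedGT α] {F : ℤ → α} (hF : Antitone F) :
    ∃ F' : ℤ → α, Antitone F' ∧ (∀ᶠ i in atBot, F' i = ⊤) ∧
      (∀ᶠ i in atTop, F' i = ⊥) ∧ ∀ i, ∃ i', F' i' = F i := by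
  obtain ⟨lo, hi, hlohi, hstab⟩ := hF.exists_eq_apply_max_min
  refine ⟨fun i => if i < lo then ⊤ else if hi < i then ⊥ else F i, ?_, ?_, ?_,
    fun i => ⟨max lo (min i hi), ?_⟩⟩
  · intro x y hxy
    dsimp only
    split_ifs <;> first | exact le_top | exact bot_le | exact hF hxy | omega
  · filter_upwards [eventually_lt_atBot lo] with i h using if_pos h
  · filter_upwards [eventually_gt_atTop hi] with i h
    rw [if_neg (by omega), if_pos h]
  · dsimp only
    rw [if_neg (by omega), if_neg (by omega), ← hstab]

/-- any two decreasing `ℤ`-filtrations on a finite-dimensional vector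
space can be simultaneously split: there is a basis adapted to both filtrations, i.e.
each filtration subspace is the span of the basis vectors it contains. -/
theorem pair_of_filtrations_simultaneously_split (K : Type*) [Field K]
    (V : Type*) [AddCommGroup V] [Module K V] [FiniteDimensional K V]
    (F G : ℤ → Submodule K V) (hF : Antitone F) (hG : Antitone G) :
    ∃ (ι : Type) (b : Module.Basis ι K V),
      (∀ i : ℤ, F i = Submodule.span K {v | v ∈ Set.range b ∧ v ∈ F i}) ∧
      (∀ j : ℤ, G j = Submodule.span K {v | v ∈ Set.range b ∧ v ∈ G j}) := by
  obtain ⟨F', hF', hF'top, hF'bot, hFF'⟩ := hF.exists_pad_top_bot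
  obtain ⟨G', hG', hG'top, hG'bot, hGG'⟩ := hG.exists_pad_top_bot
  obtain ⟨lo, hFlo, hGlo⟩ := (hF'top.and hG'top).exists
  obtain ⟨N, hFN, hGN⟩ := (hF'bot.and hG'bot).exists
  obtain ⟨ι, b, hbF, hbG⟩ := exists_basis_splits_of_eq_top_of_eq_bot hF' hG' hFlo hGlo hFN hGN
  refine ⟨ι, b, fun i => ?_, fun j => ?_⟩
  · obtain ⟨i', hi'⟩ := hFF' i
    exact hi' ▸ (hbF i').symm
  · obtain ⟨j', hj'⟩ := hGG' j
    exact hj' ▸ (hbG j').symm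
end
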